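/- Let K be the indicator function of a bounded cube Q ⊂ ℝ^d. Then ∫_{|ξ|>1} |ξ|² |K̂(ξ)|⁴ dξ < ∞. -/

import Mathlib

/-!
The Fourier transform of the indicator of a box `∏ [aᵢ, bᵢ]` is the product of the
one-dimensional transforms, and each of these is `O(1 / (1 + |ξᵢ|))`. Raising to the fourth
power gives decay `∏ (1 + |ξᵢ|)⁻⁴` in every coordinate separately, which absorbs the weight
`‖ξ‖² = ∑ ξᵢ²` term by term, via `ξᵢ² (1 + |ξᵢ|)⁻⁴ ≤ (1 + ξᵢ²)⁻¹`, and still leaves the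
integrable majorant `∏ (1 + ξⱼ²)⁻¹`.
-/

open MeasureTheory FourierTransform

open scoped Real

lemma fourier_indicator_Icc_eq (c d ξ : ℝ) :
    𝓕 ((Set.Icc c d).indicator fun _ => (1 : ℂ)) ξ =
      ∫ t in Set.Icc c d, Complex.exp (↑(-2 * π * ξ) * Complex.I * t) := by
  rw [Real.fourier_real_eq_integral_exp_smul, ← integral_indicator measurableSet_Icc]
  congr 1 with t
  by_cases ht : t ∈ Set.Icc c d
  · simp only [Set.indicator_of_mem ht, smul_eq_mul, mul_one]
    congr 1
    push_cast
    ring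
  · simp [ht]

lemma norm_exp_ofReal_mul_I_mul_ofReal (s x : ℝ) : ‖Complex.exp (s * Complex.I * x)‖ = 1 := by
  rw [mul_right_comm, ← Complex.ofReal_mul, Complex.norm_exp_ofReal_mul_I]

lemma norm_setIntegral_Icc_exp_mul_I_le_length {c d : ℝ} (hcd : c ≤ d) (s : ℝ) :
    ‖∫ t in Set.Icc c d, Complex.exp (s * Complex.I * t)‖ ≤ d - c := by
  have h := norm_setIntegral_le_of_norm_le_const (μ := volume) (s := Set.Icc c d) (C := 1)
    (by simp [Real.volume_Icc]) (fun t _ => (norm_exp_ofReal_mul_I_mul_ofReal s t).le)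
  simpa [Real.volume_Icc, hcd] using h

lemma norm_setIntegral_Icc_exp_mul_I_le_inv {c d : ℝ} (hcd : c ≤ d) {s : ℝ} (hs : s ≠ 0) :
    ‖∫ t in Set.Icc c d, Complex.exp (s * Complex.I * t)‖ ≤ 2 / |s| := by
  have hsI : (s * Complex.I : ℂ) ≠ 0 := mul_ne_zero (by exact_mod_cast hs) Complex.I_ne_zero
  rw [integral_Icc_eq_integral_Ioc, ← intervalIntegral.integral_of_le hcd,
    integral_exp_mul_complex hsI, norm_div, norm_mul, Complex.norm_I, mul_one,
    Complex.norm_real, Real.norm_eq_abs]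
  gcongr
  calc _ ≤ ‖Complex.exp (s * Complex.I * d)‖ + ‖Complex.exp (s * Complex.I * c)‖ :=
        norm_sub_le _ _
    _ = 2 := by rw [norm_exp_ofReal_mul_I_mul_ofReal, norm_exp_ofReal_mul_I_mul_ofReal]; norm_num

theorem norm_fourier_indicator_Icc_le {c d : ℝ} (hcd : c ≤ d) (ξ : ℝ) :
    ‖𝓕 ((Set.Icc c d).indicator fun _ => (1 : ℂ)) ξ‖ ≤ max (2 * (d - c)) 1 / (1 + |ξ|) := by
  rw [fourier_indicator_Icc_eq]
  have hpos : 0 < 1 + |ξ| := by positivity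
  rcases le_or_gt |ξ| 1 with hξ | hξ
  · calc _ ≤ d - c := norm_setIntegral_Icc_exp_mul_I_le_length hcd _
      _ ≤ 2 * (d - c) / (1 + |ξ|) := by rw [le_div_iff₀ hpos]; nlinarith
      _ ≤ _ := by gcongr; exact le_max_left _ _
  · have hs : -2 * π * ξ ≠ 0 := by
      have : ξ ≠ 0 := by rintro rfl; norm_num at hξ
      positivity
    calc _ ≤ 2 / |-2 * π * ξ| := norm_setIntegral_Icc_exp_mul_I_le_inv hcd hs
      _ = 1 / (π * |ξ|) := by
          rw [abs_mul, abs_mul, abs_of_pos Real.pi_pos]; field_simp; norm_num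
      _ ≤ 1 / (1 + |ξ|) := by gcongr; nlinarith [Real.pi_gt_three]
      _ ≤ _ := by gcongr; exact le_max_right _ _

lemma inv_one_add_abs_pow_four_le (t : ℝ) : ((1 + |t|) ^ 4)⁻¹ ≤ (1 + t ^ 2)⁻¹ := by
  gcongr
  nlinarith [abs_nonneg t, sq_abs t]

lemma sq_mul_inv_one_add_abs_pow_four_le (t : ℝ) : t ^ 2 * ((1 + |t|) ^ 4)⁻¹ ≤ (1 + t ^ 2)⁻¹ := by
  rw [← div_eq_mul_inv, div_le_iff₀ (by positivity), inv_mul_eq_div, le_div_iff₀ (by positivity)]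
  nlinarith [abs_nonneg t, sq_abs t, pow_two_nonneg (t ^ 2),
    mul_nonneg (abs_nonneg t) (sq_nonneg t)]

lemma isCompact_box {ι : Type*} (a b : ι → ℝ) :
    IsCompact {x : EuclideanSpace ℝ ι | ∀ i, x i ∈ Set.Icc (a i) (b i)} := by
  convert (PiLp.homeomorph 2 fun _ : ι => ℝ).isCompact_preimage.2
    (isCompact_univ_pi fun i => isCompact_Icc (a := a i) (b := b i)) using 1
  ext x
  exact Set.mem_univ_pi.symm

section

variable {ι : Type*} [Fintype ι]

lemma indicator_box_eq_prod (a b : ι → ℝ) (x : EuclideanSpace ℝ ι) :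
    {x : EuclideanSpace ℝ ι | ∀ i, x i ∈ Set.Icc (a i) (b i)}.indicator (fun _ => (1 : ℂ)) x =
      ∏ i, (Set.Icc (a i) (b i)).indicator (fun _ => 1) (x i) := by
  classical
  simp only [Set.indicator_apply, Set.mem_ofPred_eq, Finset.prod_boole, Finset.mem_univ,
    true_implies]

lemma integrable_indicator_box (a b : ι → ℝ) :
    Integrable ({x : EuclideanSpace ℝ ι | ∀ i, x i ∈ Set.Icc (a i) (b i)}.indicator
      fun _ => (1 : ℂ)) :=
  (integrable_indicator_iff (isCompact_box a b).isClosed.measurableSet).2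
    (integrableOn_const (isCompact_box a b).measure_ne_top)

theorem fourier_prod_apply (f : ι → ℝ → ℂ) (ξ : EuclideanSpace ℝ ι) :
    𝓕 (fun x : EuclideanSpace ℝ ι => ∏ i, f i (x i)) ξ = ∏ i, 𝓕 (f i) (ξ i) := by
  rw [Real.fourier_eq']
  simp_rw [Real.fourier_real_eq_integral_exp_smul, smul_eq_mul]
  rw [← (EuclideanSpace.volume_preserving_symm_measurableEquiv_toLp ι).symm.integral_comp',
    ← integral_fintype_prod_eq_prod]
  congr 1 with x
  simp only [MeasurableEquiv.symm_symm, MeasurableEquiv.coe_toLp, WithLp.ofLp_toLp,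
    PiLp.inner_apply, RCLike.inner_apply, conj_trivial, Finset.mul_sum, Complex.ofReal_sum,
    Finset.sum_mul, Complex.exp_sum, ← Finset.prod_mul_distrib]
  congr! 3
  push_cast
  ring

lemma sq_mul_prod_inv_one_add_abs_pow_four_le (ξ : ι → ℝ) (i : ι) :
    ξ i ^ 2 * ∏ j, ((1 + |ξ j|) ^ 4)⁻¹ ≤ ∏ j, (1 + ξ j ^ 2)⁻¹ := by
  classical
  rw [← Finset.mul_prod_erase _ _ (Finset.mem_univ i),
    ← Finset.mul_prod_erase _ (fun j => (1 + ξ j ^ 2)⁻¹) (Finset.mem_univ i), ← mul_assoc]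
  exact mul_le_mul (sq_mul_inv_one_add_abs_pow_four_le _)
    (Finset.prod_le_prod (fun _ _ => by positivity) fun _ _ => inv_one_add_abs_pow_four_le _)
    (by positivity) (by positivity)

lemma sq_norm_mul_prod_inv_one_add_abs_pow_four_le (ξ : EuclideanSpace ℝ ι) :
    ‖ξ‖ ^ 2 * ∏ i, ((1 + |ξ i|) ^ 4)⁻¹ ≤ Fintype.card ι * ∏ i, (1 + ξ i ^ 2)⁻¹ := by
  rw [EuclideanSpace.real_norm_sq_eq, Finset.sum_mul, ← nsmul_eq_mul, ← Finset.card_univ,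
    ← Finset.sum_const]
  exact Finset.sum_le_sum fun i _ => sq_mul_prod_inv_one_add_abs_pow_four_le ξ i

lemma integrable_prod_inv_one_add_sq :
    Integrable fun ξ : EuclideanSpace ℝ ι => ∏ i, (1 + ξ i ^ 2)⁻¹ :=
  (PiLp.volume_preserving_ofLp ι).integrable_comp_emb
    (MeasurableEquiv.toLp 2 _).symm.measurableEmbedding |>.2
    (Integrable.fintype_prod fun _ => integrable_inv_one_add_sq)

theorem integrable_sq_norm_mul_pow_four_of_norm_le_prod {f : EuclideanSpace ℝ ι → ℂ}
    (hf : AEStronglyMeasurable f) (C : ι → ℝ) (hfC : ∀ ξ, ‖f ξ‖ ≤ ∏ i, C i / (1 + |ξ i|)) :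
    Integrable fun ξ => ‖ξ‖ ^ 2 * ‖f ξ‖ ^ 4 := by
  refine (integrable_prod_inv_one_add_sq.const_mul ((∏ i, C i ^ 4) * Fintype.card ι)).mono'
    ((continuous_norm.pow 2).aestronglyMeasurable.mul (hf.norm.pow 4)) (.of_forall fun ξ => ?_)
  rw [Real.norm_of_nonneg (by positivity)]
  calc ‖ξ‖ ^ 2 * ‖f ξ‖ ^ 4 ≤ ‖ξ‖ ^ 2 * (∏ i, C i / (1 + |ξ i|)) ^ 4 := by gcongr; exact hfC ξ
    _ = (∏ i, C i ^ 4) * (‖ξ‖ ^ 2 * ∏ i, ((1 + |ξ i|) ^ 4)⁻¹) := by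
        rw [← Finset.prod_pow, mul_left_comm, ← Finset.prod_mul_distrib]
        simp only [div_eq_mul_inv, mul_pow, inv_pow]
    _ ≤ (∏ i, C i ^ 4) * (Fintype.card ι * ∏ i, (1 + ξ i ^ 2)⁻¹) := by
        gcongr ?_ * ?_
        exact sq_norm_mul_prod_inv_one_add_abs_pow_four_le ξ
    _ = _ := by ring

end

/-- If `K` is the indicator function of a bounded (axis-parallel) cube
`Q ⊂ ℝ^d`, then `∫_{|ξ|>1} |ξ|² |K̂(ξ)|⁴ dξ < ∞`. -/
theorem stmt4 {d : ℕ} (a b : Fin d → ℝ) (hab : ∀ i, a i < b i)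
    (K : EuclideanSpace ℝ (Fin d) → ℂ)
    (hK : K = Set.indicator {x : EuclideanSpace ℝ (Fin d) | ∀ i, x i ∈ Set.Icc (a i) (b i)}
      (fun _ => (1 : ℂ))) :
    IntegrableOn
      (fun ξ : EuclideanSpace ℝ (Fin d) => ‖ξ‖ ^ 2 * ‖𝓕 K ξ‖ ^ 4)
      {ξ : EuclideanSpace ℝ (Fin d) | 1 < ‖ξ‖} volume := by
  subst hK
  refine (integrable_sq_norm_mul_pow_four_of_norm_le_prod ?_
    (fun i => max (2 * (b i - a i)) 1) fun ξ => ?_).integrableOn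
  · exact (VectorFourier.fourierIntegral_continuous Real.continuous_fourierChar continuous_inner
      (integrable_indicator_box a b)).aestronglyMeasurable
  · rw [funext (indicator_box_eq_prod a b), fourier_prod_apply, norm_prod]
    exact Finset.prod_le_prod (fun _ _ => norm_nonneg _)
      fun i _ => norm_fourier_indicator_Icc_le (hab i).le (ξ i)
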